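/- If λ_1, …, λ_n ∈ [0,1] sum to 1 and n ≥ 2, and ε_Mix, ε_CutMix, ε_o are defined with λ = max_i λ_i and strictly positive a = Δ²D_s/σ_s² and b = D_y/σ_y², then ε_Mix < ε_CutMix < ε_o strictly; equality ε_Mix = ε_CutMix = ε_o holds if and only if max_i λ_i = 1. -/

import Mathlib

open Finset

/-! With λ < 1 the two gaps factor as
`ε_CutMix - ε_Mix = (αλ/2) a (1 - λ)` and `ε_o - ε_CutMix = (α/2) (a (1 - λ) + b (1 - λ²))`,
both positive. The maximum λ is below 1 because the other, positive, weights also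
contribute to the total mass 1; hence the equality case `λ = 1` never occurs. -/

noncomputable section Budgets

variable (α l a b : ℝ)

def mixBudget : ℝ := α * l ^ 2 / 2 * (a + b)

def cutMixBudget : ℝ := α * l / 2 * (a + l * b)

def baseBudget : ℝ := α / 2 * (a + b)

variable {α l a b}

theorem cutMixBudget_sub_mixBudget :
    cutMixBudget α l a b - mixBudget α l a b = α * l / 2 * (a * (1 - l)) := by
  unfold cutMixBudget mixBudget; ring

theorem baseBudget_sub_cutMixBudget :
    baseBudget α a b - cutMixBudget α l a b = α / 2 * (a * (1 - l) + b * (1 - l ^ 2)) := by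
  unfold baseBudget cutMixBudget; ring

theorem mixBudget_lt_cutMixBudget (hα : 0 < α) (hl₀ : 0 < l) (hl₁ : l < 1) (ha : 0 < a) :
    mixBudget α l a b < cutMixBudget α l a b := by
  have hgap : 0 < α * l / 2 * (a * (1 - l)) := by
    have := sub_pos.mpr hl₁
    positivity
  linarith [cutMixBudget_sub_mixBudget (α := α) (l := l) (a := a) (b := b)]

theorem cutMixBudget_lt_baseBudget (hα : 0 < α) (hl₀ : 0 ≤ l) (hl₁ : l < 1) (ha : 0 < a)
    (hb : 0 ≤ b) : cutMixBudget α l a b < baseBudget α a b := by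
  have hgap : 0 < α / 2 * (a * (1 - l) + b * (1 - l ^ 2)) := by
    have h₁ := sub_pos.mpr hl₁
    have h₂ : 0 ≤ 1 - l ^ 2 := by nlinarith
    positivity
  linarith [baseBudget_sub_cutMixBudget (α := α) (l := l) (a := a) (b := b)]

end Budgets

theorem strict_budget_ordering_general
    (n : ℕ) (hn : 2 ≤ n) (lam : Fin n → ℝ)
    (hpos : ∀ i, 0 < lam i)
    (hsum : ∑ i, lam i = 1)
    (lmax : ℝ) (hmax : IsGreatest (Set.range lam) lmax)
    (a b α : ℝ) (ha : 0 < a) (hb : 0 < b) (hα : 0 < α) :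
    (α * lmax ^ 2 / 2 * (a + b) < α * lmax / 2 * (a + lmax * b) ∧
      α * lmax / 2 * (a + lmax * b) < α / 2 * (a + b)) ∧
    ((α * lmax ^ 2 / 2 * (a + b) = α * lmax / 2 * (a + lmax * b) ∧
      α * lmax / 2 * (a + lmax * b) = α / 2 * (a + b)) ↔ lmax = 1) := by
  obtain ⟨⟨k, rfl⟩, -⟩ := hmax
  have : Nontrivial (Fin n) := Fin.nontrivial_iff_two_le.mpr hn
  obtain ⟨j, hjk⟩ := exists_ne k
  have hlt : lam k < 1 :=
    hsum ▸ single_lt_sum hjk (mem_univ k) (mem_univ j) (hpos j) fun i _ _ => (hpos i).le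
  have hmix := mixBudget_lt_cutMixBudget (b := b) hα (hpos k) hlt ha
  have hcut := cutMixBudget_lt_baseBudget hα (hpos k).le hlt ha hb.le
  exact ⟨⟨hmix, hcut⟩, iff_of_false (fun h => hmix.ne h.1) hlt.ne⟩

/-- For n ≥ 2 positive mixing ratios λ_i ∈ [0,1] summing to 1, with λ = max λ_i and
a, b, α > 0, the budgets satisfy ε_Mix < ε_CutMix < ε_o strictly, and
ε_Mix = ε_CutMix = ε_o holds if and only if max λ_i = 1. -/
theorem strict_budget_ordering
    (n : ℕ) (hn : 2 ≤ n) (lam : Fin n → ℝ)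
    (hlam : ∀ i, lam i ∈ Set.Icc (0 : ℝ) 1) (hpos : ∀ i, 0 < lam i)
    (hsum : ∑ i, lam i = 1)
    (lmax : ℝ) (hmax : IsGreatest (Set.range lam) lmax)
    (a b α : ℝ) (ha : 0 < a) (hb : 0 < b) (hα : 0 < α) :
    (α * lmax ^ 2 / 2 * (a + b) < α * lmax / 2 * (a + lmax * b) ∧
      α * lmax / 2 * (a + lmax * b) < α / 2 * (a + b)) ∧
    ((α * lmax ^ 2 / 2 * (a + b) = α * lmax / 2 * (a + lmax * b) ∧
      α * lmax / 2 * (a + lmax * b) = α / 2 * (a + b)) ↔ lmax = 1) :=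
  strict_budget_ordering_general n hn lam hpos hsum lmax hmax a b α ha hb hα
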